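/- arXiv:2402.09139 — 5 statements merged into one kernel-verified Lean document; each statement's English description precedes it below -/
import Mathlib

section
/- Let G be a finite graph and let P = {X₁,...,X_d}, Q = {Y₁,...,Y_e} be partitions of E(G) with X₁ ∪ Y₁ ≠ E(G). Define wid(π) := |δ(π)| where δ(π) is the union of the boundaries δ(Z) over blocks Z of π, and for a partition P and a set F, the F-extension P_{Xᵢ→F} replaces Xᵢ by Xᵢ ∪ F and every other block Z by Z\F. Then wid(P) + wid(Q) ≥ wid(P_{X₁→E(G)\Y₁}) + wid(Q_{Y₁→E(G)\X₁}), i.e., the width function on partitions of the edge set is submodular. -/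
/-- The boundary of an edge set `X` inside the edge set `E` of a graph:
vertices incident both to an edge in `X` and to an edge in `E \ X`. -/
def bdry {V : Type*} (E X : Set (Finset V)) : Set V :=
  {v | ∃ e ∈ X, ∃ e' ∈ E \ X, v ∈ e ∧ v ∈ e'}

/-- `E` is the edge set of a (finite) graph: every edge is a nonempty set of at most 2 vertices. -/
def IsGraphEdges {V : Type*} (E : Set (Finset V)) : Prop :=
  ∀ e ∈ E, e.Nonempty ∧ e.card ≤ 2
/-- An indexed family is a partition of the edge set `E` (empty blocks allowed). -/
def IsPartitionOn {V : Type*} (E : Set (Finset V)) {d : ℕ} (P : Fin d → Set (Finset V)) : Prop :=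
  (∀ i j, i ≠ j → Disjoint (P i) (P j)) ∧ (⋃ i, P i) = E

/-- The `F`-extension of a partition in its block with index `i0`. -/
def extendPart {α : Type*} {d : ℕ} (P : Fin d → Set α) (i0 : Fin d) (F : Set α) :
    Fin d → Set α := fun j => if j = i0 then P j ∪ F else P j \ F

/-- The boundary of a partition: union of the boundaries of its blocks. -/
def deltaPart {V : Type*} (E : Set (Finset V)) {d : ℕ} (P : Fin d → Set (Finset V)) : Set V :=
  ⋃ i, bdry E (P i)

/-- The width of a partition of an edge set. -/
noncomputable def widPart {V : Type*} (E : Set (Finset V)) {d : ℕ}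
    (P : Fin d → Set (Finset V)) : ℕ :=
  (deltaPart E P).ncard

/-- Submodularity of the width function on partitions of the edge set of a graph. -/
theorem wid_submodular {V : Type*} [Fintype V] [DecidableEq V]
    (E : Set (Finset V)) (hG : IsGraphEdges E)
    {d e : ℕ} (P : Fin d → Set (Finset V)) (Q : Fin e → Set (Finset V))
    (hP : IsPartitionOn E P) (hQ : IsPartitionOn E Q)
    (i0 : Fin d) (j0 : Fin e) (hXY : P i0 ∪ Q j0 ≠ E) :
    widPart E (extendPart P i0 (E \ Q j0)) + widPart E (extendPart Q j0 (E \ P i0)) ≤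
      widPart E P + widPart E Q := by
  classical
  obtain ⟨hPd, hPu⟩ := hP
  obtain ⟨hQd, hQu⟩ := hQ
  have hPE : ∀ i, P i ⊆ E := fun i => hPu ▸ Set.subset_iUnion P i
  have hQE : ∀ j, Q j ⊆ E := fun j => hQu ▸ Set.subset_iUnion Q j
  set P' := extendPart P i0 (E \ Q j0) with hP'def
  set Q' := extendPart Q j0 (E \ P i0) with hQ'def
  -- membership characterization of deltaPart
  have hmem : ∀ {n : ℕ} (R : Fin n → Set (Finset V)) (v : V),
      v ∈ deltaPart E R ↔
        ∃ i f g, f ∈ R i ∧ g ∈ E ∧ g ∉ R i ∧ v ∈ f ∧ v ∈ g := by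
    intro n R v
    simp only [deltaPart, bdry, Set.mem_iUnion, Set.mem_setOf_eq, Set.mem_diff]
    constructor
    · rintro ⟨i, f, hf, g, ⟨hgE, hg⟩, hvf, hvg⟩
      exact ⟨i, f, g, hf, hgE, hg, hvf, hvg⟩
    · rintro ⟨i, f, g, hf, hgE, hg, hvf, hvg⟩
      exact ⟨i, f, hf, g, ⟨hgE, hg⟩, hvf, hvg⟩
  -- union inclusion
  have hUnion : deltaPart E P' ∪ deltaPart E Q' ⊆ deltaPart E P ∪ deltaPart E Q := by
    intro v hv
    have key : ∀ {n : ℕ} (R : Fin n → Set (Finset V)) (k0 : Fin n) (F : Set (Finset V))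
        (hRd : ∀ i j, i ≠ j → Disjoint (R i) (R j)) (hRu : (⋃ i, R i) = E)
        (hFE : F = Q j0 ∨ F = P i0),
        v ∈ deltaPart E (extendPart R k0 (E \ F)) →
          v ∈ deltaPart E R ∪ {w | ∃ f g, f ∈ F ∧ g ∈ E ∧ g ∉ F ∧ w ∈ f ∧ w ∈ g} := by
      intro n R k0 F hRd hRu hFE hv
      have hRE : ∀ i, R i ⊆ E := fun i => hRu ▸ Set.subset_iUnion R i
      rw [hmem] at hv
      obtain ⟨i, f, g, hf, hgE, hg, hvf, hvg⟩ := hv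
      simp only [extendPart] at hf hg
      by_cases hik : i = k0
      · simp only [hik, if_pos rfl] at hf hg
        have hg1 : g ∉ R k0 := fun h => hg (Or.inl h)
        have hg2 : g ∉ E \ F := fun h => hg (Or.inr h)
        have hgF : g ∈ F := by
          by_contra hgF
          exact (hg2 ⟨hgE, hgF⟩)
        rcases hf with hfR | hfF
        · left
          rw [hmem]
          exact ⟨k0, f, g, hfR, hgE, hg1, hvf, hvg⟩
        · right
          exact ⟨g, f, hgF, hfF.1, hfF.2, hvg, hvf⟩
      · simp only [if_neg hik] at hf hg
        obtain ⟨hfR, hfF⟩ := hf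
        have hfF' : f ∈ F := by
          by_contra h
          exact hfF ⟨hRE i hfR, h⟩
        by_cases hgR : g ∈ R i
        · -- g ∈ R i but g ∉ R i \ (E \ F), so g ∈ E \ F
          have hgEF : g ∈ E \ F := by
            by_contra h
            exact hg ⟨hgR, h⟩
          right
          exact ⟨f, g, hfF', hgE, hgEF.2, hvf, hvg⟩
        · left
          rw [hmem]
          exact ⟨i, f, g, hfR, hgE, hgR, hvf, hvg⟩
    rcases hv with hv | hv
    · have := key P i0 (Q j0) hPd hPu (Or.inl rfl) hv
      rcases this with h | h
      · exact Or.inl h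
      · obtain ⟨f, g, hfQ, hgE, hgQ, hvf, hvg⟩ := h
        right
        rw [hmem]
        exact ⟨j0, f, g, hfQ, hgE, hgQ, hvf, hvg⟩
    · have := key Q j0 (P i0) hQd hQu (Or.inr rfl) hv
      rcases this with h | h
      · exact Or.inr h
      · obtain ⟨f, g, hfP, hgE, hgP, hvf, hvg⟩ := h
        left
        rw [hmem]
        exact ⟨i0, f, g, hfP, hgE, hgP, hvf, hvg⟩
  -- any v in delta of an extension has an edge in F-complement block structure:
  -- v ∈ deltaPart E P' → ∃ edge at v in Q j0 \ P i0
  have hwitP : ∀ v, v ∈ deltaPart E P' → ∃ f, f ∈ Q j0 ∧ f ∉ P i0 ∧ v ∈ f := by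
    intro v hv
    rw [hmem] at hv
    obtain ⟨i, f, g, hf, hgE, hg, hvf, hvg⟩ := hv
    simp only [hP'def, extendPart] at hf hg
    by_cases hik : i = i0
    · simp only [hik, if_pos rfl] at hg
      have hg1 : g ∉ P i0 := fun h => hg (Or.inl h)
      have hg2 : g ∉ E \ Q j0 := fun h => hg (Or.inr h)
      have hgQ : g ∈ Q j0 := by
        by_contra h; exact hg2 ⟨hgE, h⟩
      exact ⟨g, hgQ, hg1, hvg⟩
    · simp only [if_neg hik] at hf
      obtain ⟨hfR, hfF⟩ := hf
      have hfQ : f ∈ Q j0 := by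
        by_contra h; exact hfF ⟨hPE i hfR, h⟩
      have hfP : f ∉ P i0 := fun h =>
        (hPd i i0 hik).le_bot ⟨hfR, h⟩
      exact ⟨f, hfQ, hfP, hvf⟩
  have hwitQ : ∀ v, v ∈ deltaPart E Q' → ∃ f, f ∈ P i0 ∧ f ∉ Q j0 ∧ v ∈ f := by
    intro v hv
    rw [hmem] at hv
    obtain ⟨i, f, g, hf, hgE, hg, hvf, hvg⟩ := hv
    simp only [hQ'def, extendPart] at hf hg
    by_cases hik : i = j0
    · simp only [hik, if_pos rfl] at hg
      have hg1 : g ∉ Q j0 := fun h => hg (Or.inl h)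
      have hg2 : g ∉ E \ P i0 := fun h => hg (Or.inr h)
      have hgP : g ∈ P i0 := by
        by_contra h; exact hg2 ⟨hgE, h⟩
      exact ⟨g, hgP, hg1, hvg⟩
    · simp only [if_neg hik] at hf
      obtain ⟨hfR, hfF⟩ := hf
      have hfP : f ∈ P i0 := by
        by_contra h; exact hfF ⟨hQE i hfR, h⟩
      have hfQ : f ∉ Q j0 := fun h =>
        (hQd i j0 hik).le_bot ⟨hfR, h⟩
      exact ⟨f, hfP, hfQ, hvf⟩
  -- intersection inclusion
  have hInter : deltaPart E P' ∩ deltaPart E Q' ⊆ deltaPart E P ∩ deltaPart E Q := by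
    rintro v ⟨hv1, hv2⟩
    obtain ⟨f, hfQ, hfP, hvf⟩ := hwitP v hv1
    obtain ⟨g, hgP, hgQ, hvg⟩ := hwitQ v hv2
    have hfE : f ∈ E := hQE j0 hfQ
    have hgE : g ∈ E := hPE i0 hgP
    constructor
    · rw [hmem]
      exact ⟨i0, g, f, hgP, hfE, hfP, hvg, hvf⟩
    · rw [hmem]
      exact ⟨j0, f, g, hfQ, hgE, hgQ, hvf, hvg⟩
  -- finish by cardinality arithmetic
  have h1 : widPart E P' + widPart E Q' =
      (deltaPart E P' ∪ deltaPart E Q').ncard + (deltaPart E P' ∩ deltaPart E Q').ncard := by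
    unfold widPart
    rw [Set.ncard_union_add_ncard_inter]
  have h2 : widPart E P + widPart E Q =
      (deltaPart E P ∪ deltaPart E Q).ncard + (deltaPart E P ∩ deltaPart E Q).ncard := by
    unfold widPart
    rw [Set.ncard_union_add_ncard_inter]
  rw [h1, h2]
  exact Nat.add_le_add (Set.ncard_le_ncard hUnion (Set.toFinite _))
    (Set.ncard_le_ncard hInter (Set.toFinite _))
end

section
/- Let (T, r, β, γ) be a pre-tree decomposition of a graph G and (T', r) a subtree of (T, r) with the same root in which every edge is exact. Then for every vertex v ∈ V(G), the set {t ∈ V(T') | v ∈ δ(π_t)} induces a connected subgraph of T'. -/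
/-- A rooted tree given by a parent function: every node reaches the root by
iterating the parent function. -/
structure ParentTree (TV : Type*) where
  root : TV
  par : TV → TV
  par_root : par root = root
  reaches : ∀ t, ∃ n, par^[n] t = root

/-- The underlying (simple) tree graph of a rooted tree. -/
def treeGraph {TV : Type*} (R : ParentTree TV) : SimpleGraph TV :=
  SimpleGraph.fromRel (fun s t => s ≠ R.root ∧ R.par s = t)

/-- Adjacency in the tree. -/
def treeAdj {TV : Type*} (R : ParentTree TV) (s t : TV) : Prop := (treeGraph R).Adj s t

/-- A leaf of the rooted tree: a non-root node with no children. -/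
def IsTreeLeaf {TV : Type*} (R : ParentTree TV) (t : TV) : Prop :=
  t ≠ R.root ∧ ∀ c, c ≠ R.root → R.par c ≠ t

/-- A node of a rooted tree with no children (used for leaves in depth bounds). -/
def NoChild {TV : Type*} (R : ParentTree TV) (t : TV) : Prop :=
  ∀ c, c ≠ R.root → R.par c ≠ t

/-- The set of nodes on the path from `t` to the root. -/
def pathSet {TV : Type*} (R : ParentTree TV) (t : TV) : Set TV :=
  {s | ∃ i, R.par^[i] t = s}

/-- `(T, r, β)` is a tree decomposition of the graph with edge set `E` on vertex set `V`:
(T1) every vertex and every edge is covered by some bag, and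
(T2) for each vertex, the set of nodes whose bag contains it induces a connected
subgraph of the tree. -/
def IsTreeDecomp {V : Type*} (E : Set (Finset V)) {TV : Type*} (R : ParentTree TV)
    (β : TV → Set V) : Prop :=
  (∀ v : V, ∃ t, v ∈ β t) ∧
  (∀ e ∈ E, ∃ t, (e : Set V) ⊆ β t) ∧
  (∀ v : V, ((treeGraph R).induce {t | v ∈ β t}).Connected)

/-- The tree decomposition has width at most `k - 1`, i.e. all bags have size at most `k`. -/
def TDWidthLe {V TV : Type*} (β : TV → Set V) (k : ℕ) : Prop :=
  ∀ t, (β t).ncard ≤ k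

/-- The tree decomposition has depth at most `q`: for every leaf, the union of the
bags on the path from the root to the leaf has size at most `q`. -/
def TDDepthLe {V TV : Type*} (R : ParentTree TV) (β : TV → Set V) (q : ℕ) : Prop :=
  ∀ ℓ, NoChild R ℓ → (⋃ s ∈ pathSet R ℓ, β s).ncard ≤ q
/-- Two edges are in the same connected component of the graph with edge set `E`. -/
def EdgeConnRel {V : Type*} [DecidableEq V] (E : Set (Finset V)) :
    Finset V → Finset V → Prop :=
  Relation.ReflTransGen (fun a b => a ∈ E ∧ b ∈ E ∧ (a ∩ b).Nonempty)

/-- The edge set of the connected component containing the edge `e`. -/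
def edgeComp {V : Type*} [DecidableEq V] (E : Set (Finset V)) (e : Finset V) :
    Set (Finset V) :=
  {e' | e' ∈ E ∧ EdgeConnRel E e e'}

/-- `δ(π_t)`: the boundary of the partition of `E` given by the cones from `t`
towards its neighbours. -/
def deltaNode {V TV : Type*} (E : Set (Finset V)) (R : ParentTree TV)
    (γ : TV → TV → Set (Finset V)) (t : TV) : Set V :=
  ⋃ s ∈ {s | treeAdj R t s}, bdry E (γ t s)

/-- A pre-tree decomposition of the graph with edge set `E`: axioms (PT1)–(PT4). -/
structure IsPreTreeDecomp {V : Type*} [DecidableEq V] (E : Set (Finset V)) {TV : Type*}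
    (R : ParentTree TV) (β : TV → Set V) (γ : TV → TV → Set (Finset V)) : Prop where
  cone_sub : ∀ s t, treeAdj R s t → γ s t ⊆ E
  root_bag : β R.root = ∅
  pt1 : ∀ e ∈ E, ∃ c, c ≠ R.root ∧ R.par c = R.root ∧ γ R.root c = edgeComp E e
  pt2 : ∀ ℓ, IsTreeLeaf R ℓ → (γ ℓ (R.par ℓ)).ncard ≤ 1
  pt3_disj : ∀ t s s', treeAdj R t s → treeAdj R t s' → s ≠ s' →
      Disjoint (γ t s) (γ t s')
  pt3_cover : ∀ t, ¬ IsTreeLeaf R t → (⋃ s ∈ {s | treeAdj R t s}, γ t s) = E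
  pt3_bag : ∀ t, deltaNode E R γ t ⊆ β t
  pt4 : ∀ s t, treeAdj R s t → Disjoint (γ s t) (γ t s)

/-- The tree edge `st` is exact: the two opposite cones cover all of `E`. -/
def ExactEdge {V TV : Type*} (E : Set (Finset V)) (γ : TV → TV → Set (Finset V))
    (s t : TV) : Prop :=
  γ s t ∪ γ t s = E

/-- The pre-tree decomposition has width at most `k - 1`. -/
def PTDWidthLe {V TV : Type*} (β : TV → Set V) (k : ℕ) : Prop :=
  ∀ t, (β t).ncard ≤ k

/-- The pre-tree decomposition has depth at most `q`:
`Σ_{s ∈ P_t \ {r}} |β(s) \ β(parent s)| ≤ q` along every root-to-node path. -/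
def PTDDepthLe {V TV : Type*} (R : ParentTree TV) (β : TV → Set V) (q : ℕ) : Prop :=
  ∀ t n, R.par^[n] t = R.root →
    ∑ i ∈ Finset.range n, ((β (R.par^[i] t)) \ (β (R.par^[(i+1)] t))).ncard ≤ q

/-- A subtree of the rooted tree with the same root: a set of nodes containing the
root and closed under taking parents. -/
def IsRootedSubtree {TV : Type*} (R : ParentTree TV) (S : Set TV) : Prop :=
  R.root ∈ S ∧ ∀ t ∈ S, t ≠ R.root → R.par t ∈ S

/-- A leaf of the subtree `S`: a node of `S` with no children inside `S`. -/
def SubLeaf {TV : Type*} (R : ParentTree TV) (S : Set TV) (ℓ : TV) : Prop :=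
  ℓ ∈ S ∧ ∀ c ∈ S, c ≠ R.root → R.par c ≠ ℓ

/-- All edges of the subtree `S` are exact. -/
def SubtreeExact {V TV : Type*} (E : Set (Finset V)) (R : ParentTree TV)
    (γ : TV → TV → Set (Finset V)) (S : Set TV) : Prop :=
  ∀ t ∈ S, t ≠ R.root → ExactEdge E γ (R.par t) t

section Aux

namespace PTDProof

attribute [local instance] Classical.propDecidable

lemma root_iter {TV : Type*} (R : ParentTree TV) (n : ℕ) :
    R.par^[n] R.root = R.root :=
  Function.iterate_fixed R.par_root n

noncomputable def dep {TV : Type*} (R : ParentTree TV) (t : TV) : ℕ :=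
  Nat.find (R.reaches t)

variable {TV : Type*} {R : ParentTree TV}

lemma dep_spec (t : TV) : R.par^[dep R t] t = R.root := Nat.find_spec (R.reaches t)

lemma eq_root_of_dep_eq_zero {t : TV} (h : dep R t = 0) : t = R.root := by
  have h2 := dep_spec (R := R) t
  rwa [h, Function.iterate_zero_apply] at h2

lemma par_ne_self {t : TV} (ht : t ≠ R.root) : R.par t ≠ t := by
  intro h
  obtain ⟨n, hn⟩ := R.reaches t
  rw [Function.iterate_fixed h n] at hn
  exact ht hn

lemma dep_par {t : TV} (ht : t ≠ R.root) : dep R (R.par t) + 1 = dep R t := by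
  have h1 : R.par^[dep R (R.par t)] (R.par t) = R.root := dep_spec _
  have h2' : R.par^[dep R (R.par t) + 1] t = R.root := by
    rw [Function.iterate_succ_apply]; exact h1
  have h2 : dep R t ≤ dep R (R.par t) + 1 := Nat.find_le h2'
  have h3 : dep R t ≠ 0 := fun h => ht (eq_root_of_dep_eq_zero h)
  obtain ⟨k, hk⟩ := Nat.exists_eq_succ_of_ne_zero h3
  have h4 : R.par^[k] (R.par t) = R.root := by
    rw [← Function.iterate_succ_apply, ← hk]; exact dep_spec t
  have h5 : dep R (R.par t) ≤ k := Nat.find_le h4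
  omega

lemma adj_par {t : TV} (ht : t ≠ R.root) : treeAdj R t (R.par t) := by
  unfold treeAdj treeGraph
  rw [SimpleGraph.fromRel_adj]
  exact ⟨(par_ne_self ht).symm, Or.inl ⟨ht, rfl⟩⟩

lemma adj_symm {s t : TV} (h : treeAdj R s t) : treeAdj R t s :=
  SimpleGraph.Adj.symm h

lemma adj_par' {t : TV} (ht : t ≠ R.root) : treeAdj R (R.par t) t :=
  adj_symm (adj_par ht)

lemma dep_desc {t t' : TV} (ht : t ≠ R.root) :
    ∀ j, R.par^[j] t' = t → dep R t' = dep R t + j := by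
  intro j
  induction j generalizing t' with
  | zero => intro h; simp only [Function.iterate_zero_apply] at h; rw [h]; omega
  | succ j ih =>
    intro h
    rw [Function.iterate_succ_apply] at h
    have ht' : t' ≠ R.root := by
      intro he
      rw [he, R.par_root, root_iter] at h
      exact ht h.symm
    have h2 := ih h
    have h3 := dep_par (R := R) ht'
    omega

end PTDProof

end Aux

section Main

namespace PTDProof

variable {V : Type*} [DecidableEq V] {TV : Type*}
variable {E : Set (Finset V)} {R : ParentTree TV} {β : TV → Set V}
  {γ : TV → TV → Set (Finset V)}
variable {S : Set TV} {v : V}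

lemma mem_delta_iff {u : TV} :
    v ∈ deltaNode E R γ u ↔ ∃ s, treeAdj R u s ∧ v ∈ bdry E (γ u s) := by
  simp [deltaNode]

lemma ne_root_of_delta (hptd : IsPreTreeDecomp E R β γ) {u : TV}
    (h : v ∈ deltaNode E R γ u) : u ≠ R.root := by
  intro he
  have h2 := hptd.pt3_bag u h
  rw [he, hptd.root_bag] at h2
  exact h2

lemma S_iter (hS : IsRootedSubtree R S) {t : TV} (ht : t ∈ S) :
    ∀ i, R.par^[i] t ∈ S := by
  intro i
  induction i with
  | zero => simpa using ht
  | succ i ih =>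
    rw [Function.iterate_succ_apply']
    by_cases h : R.par^[i] t = R.root
    · rw [h, R.par_root]; exact hS.1
    · exact hS.2 _ ih h

lemma exact_mem (hex : SubtreeExact E R γ S) {w : TV} (hw : w ∈ S)
    (hwr : w ≠ R.root) {x : Finset V} (hx : x ∈ E) (h : x ∉ γ (R.par w) w) :
    x ∈ γ w (R.par w) := by
  have h2 := hex w hw hwr
  unfold ExactEdge at h2
  rw [← h2] at hx
  rcases hx with hx | hx
  · exact absurd hx h
  · exact hx

lemma exact_mem' (hex : SubtreeExact E R γ S) {w : TV} (hw : w ∈ S)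
    (hwr : w ≠ R.root) {x : Finset V} (hx : x ∈ E) (h : x ∉ γ w (R.par w)) :
    x ∈ γ (R.par w) w := by
  have h2 := hex w hw hwr
  unfold ExactEdge at h2
  rw [← h2] at hx
  rcases hx with hx | hx
  · exact hx
  · exact absurd hx h

/-- Chain nesting: the cone below `t` is contained in the cone below each strict
ancestor of `t` (in the direction of `t`). -/
lemma alpha (hptd : IsPreTreeDecomp E R β γ) (hS : IsRootedSubtree R S)
    (hex : SubtreeExact E R γ S) {t : TV} (htS : t ∈ S) (htr : t ≠ R.root) :
    ∀ i, (∀ k ≤ i, R.par^[k] t ≠ R.root) →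
      γ (R.par t) t ⊆ γ (R.par^[i+1] t) (R.par^[i] t) := by
  have hDE : γ (R.par t) t ⊆ E := hptd.cone_sub _ _ (adj_par' htr)
  intro i
  induction i with
  | zero => intro _; simp
  | succ i ih =>
    intro h
    have hIH := ih (fun k hk => h k (Nat.le_succ_of_le hk))
    have har : R.par^[i] t ≠ R.root := h i (by omega)
    have hur : R.par^[i+1] t ≠ R.root := h (i+1) le_rfl
    have hau : R.par (R.par^[i] t) = R.par^[i+1] t :=
      (Function.iterate_succ_apply' R.par i t).symm
    have hub : R.par (R.par^[i+1] t) = R.par^[i+1+1] t :=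
      (Function.iterate_succ_apply' R.par (i+1) t).symm
    have huS : R.par^[i+1] t ∈ S := S_iter hS htS (i+1)
    have hadj_ua : treeAdj R (R.par^[i+1] t) (R.par^[i] t) := by
      rw [← hau]; exact adj_par' har
    have hadj_ub : treeAdj R (R.par^[i+1] t) (R.par (R.par^[i+1] t)) := adj_par hur
    have hab : R.par^[i] t ≠ R.par (R.par^[i+1] t) := by
      intro he
      have d1 := dep_par (R := R) har
      have d2 := dep_par (R := R) hur
      rw [hau] at d1
      rw [← he] at d2
      omega
    have hdisj := hptd.pt3_disj _ _ _ hadj_ua hadj_ub hab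
    intro x hx
    have hxE : x ∈ E := hDE hx
    have hxa : x ∈ γ (R.par^[i+1] t) (R.par^[i] t) := hIH hx
    have hxb : x ∉ γ (R.par^[i+1] t) (R.par (R.par^[i+1] t)) := fun hc =>
      Set.disjoint_left.mp hdisj hxa hc
    rw [← hub]
    exact exact_mem' hex huS hur hxE hxb

/-- If `w` is a strict ancestor of `t`, some cone of `w` (towards `t`) contains the
cone below `t`. -/
lemma anc_cone (hptd : IsPreTreeDecomp E R β γ) (hS : IsRootedSubtree R S)
    (hex : SubtreeExact E R γ S) {t : TV} (htS : t ∈ S) (htr : t ≠ R.root)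
    {w : TV} (hanc : ∃ i, R.par^[i] t = w) (hnd : ¬∃ j, R.par^[j] w = t) :
    ∃ s, s ≠ R.root ∧ R.par s = w ∧ (∃ k, R.par^[k] t = s) ∧
      γ (R.par t) t ⊆ γ w s := by
  classical
  have hspec : R.par^[Nat.find hanc] t = w := Nat.find_spec hanc
  have hi0 : Nat.find hanc ≠ 0 := by
    intro h
    rw [h, Function.iterate_zero_apply] at hspec
    exact hnd ⟨0, by rw [Function.iterate_zero_apply, hspec]⟩
  obtain ⟨i', hi'⟩ := Nat.exists_eq_succ_of_ne_zero hi0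
  rw [Nat.succ_eq_add_one] at hi'
  have hkr : ∀ k ≤ i', R.par^[k] t ≠ R.root := by
    intro k hk hke
    have hw_root : w = R.root := by
      rw [← hspec, hi']
      have h5 : i' + 1 = (i' + 1 - k) + k := by omega
      rw [h5, Function.iterate_add_apply, hke, root_iter]
    exact Nat.find_min hanc (by omega : k < Nat.find hanc) (by rw [hke, hw_root])
  have hsub := alpha hptd hS hex htS htr i' hkr
  have h6 : R.par^[i'+1] t = w := by rw [← hi']; exact hspec
  refine ⟨R.par^[i'] t, hkr i' le_rfl, ?_, ⟨i', rfl⟩, ?_⟩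
  · rw [← h6, Function.iterate_succ_apply']
  · rw [show w = R.par^[i'+1] t from h6.symm]
    exact hsub

/-- If `w` is neither an ancestor nor a descendant of `t` (nor `t` itself), then the
cone below `t` is contained in the upward cone of `w`. -/
lemma beta (hptd : IsPreTreeDecomp E R β γ) (hS : IsRootedSubtree R S)
    (hex : SubtreeExact E R γ S) {t : TV} (htS : t ∈ S) (htr : t ≠ R.root) :
    ∀ n, ∀ w, w ∈ S → dep R w ≤ n → (¬∃ j, R.par^[j] w = t) →
      (¬∃ i, R.par^[i] t = w) → γ (R.par t) t ⊆ γ w (R.par w) := by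
  have hDE : γ (R.par t) t ⊆ E := hptd.cone_sub _ _ (adj_par' htr)
  intro n
  induction n with
  | zero =>
    intro w hw hd hnd hna
    exact absurd ⟨dep R t, by
      rw [eq_root_of_dep_eq_zero (Nat.le_zero.mp hd)]; exact dep_spec t⟩ hna
  | succ n ih =>
    intro w hw hd hnd hna
    have hwr : w ≠ R.root := by
      intro he
      exact hna ⟨dep R t, by rw [he]; exact dep_spec t⟩
    have hpS : R.par w ∈ S := hS.2 w hw hwr
    have hpd : dep R (R.par w) ≤ n := by
      have := dep_par (R := R) hwr; omega
    have hnd_p : ¬∃ j, R.par^[j] (R.par w) = t := by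
      rintro ⟨j, hj⟩
      exact hnd ⟨j + 1, by rw [Function.iterate_succ_apply]; exact hj⟩
    by_cases hanc : ∃ i, R.par^[i] t = R.par w
    · obtain ⟨s, hsr, hsp, ⟨k, hks⟩, hsub⟩ := anc_cone hptd hS hex htS htr hanc hnd_p
      have hsw : s ≠ w := by rintro rfl; exact hna ⟨k, hks⟩
      have hadj_ps : treeAdj R (R.par w) s := by rw [← hsp]; exact adj_par' hsr
      have hadj_pw : treeAdj R (R.par w) w := adj_par' hwr
      have hdisj := hptd.pt3_disj _ _ _ hadj_ps hadj_pw hsw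
      intro x hx
      exact exact_mem hex hw hwr (hDE hx)
        (fun hc => Set.disjoint_left.mp hdisj (hsub hx) hc)
    · have hsub := ih (R.par w) hpS hpd hnd_p hanc
      have hpr : R.par w ≠ R.root := by
        intro he; exact hanc ⟨dep R t, by rw [he]; exact dep_spec t⟩
      have hppw : R.par (R.par w) ≠ w := by
        intro he
        have d1 := dep_par (R := R) hwr
        have d2 := dep_par (R := R) hpr
        rw [he] at d2
        omega
      have hadj_ps : treeAdj R (R.par w) (R.par (R.par w)) := adj_par hpr
      have hadj_pw : treeAdj R (R.par w) w := adj_par' hwr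
      have hdisj := hptd.pt3_disj _ _ _ hadj_ps hadj_pw hppw
      intro x hx
      exact exact_mem hex hw hwr (hDE hx)
        (fun hc => Set.disjoint_left.mp hdisj (hsub hx) hc)

/-- Separation: if `w ∈ S` is not a (weak) descendant of `t`, then some single cone
of `w` contains the whole cone below `t`. -/
lemma sep (hptd : IsPreTreeDecomp E R β γ) (hS : IsRootedSubtree R S)
    (hex : SubtreeExact E R γ S) {t : TV} (htS : t ∈ S) (htr : t ≠ R.root)
    {w : TV} (hw : w ∈ S) (hnd : ¬∃ j, R.par^[j] w = t) :
    ∃ s, treeAdj R w s ∧ γ (R.par t) t ⊆ γ w s := by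
  by_cases hanc : ∃ i, R.par^[i] t = w
  · obtain ⟨s, hsr, hsp, _, hsub⟩ := anc_cone hptd hS hex htS htr hanc hnd
    exact ⟨s, by rw [← hsp]; exact adj_par' hsr, hsub⟩
  · have hwr : w ≠ R.root := fun he => hanc ⟨dep R t, by rw [he]; exact dep_spec t⟩
    exact ⟨R.par w, adj_par hwr, beta hptd hS hex htS htr (dep R w) w hw le_rfl hnd hanc⟩

/-- The key step: if `t` and `t'` are distinct boundary nodes with `t` at least as
deep, then the parent of `t` is also a boundary node (in `S`). -/
lemma cross (hptd : IsPreTreeDecomp E R β γ) (hS : IsRootedSubtree R S)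
    (hex : SubtreeExact E R γ S) {t t' : TV} (htS : t ∈ S)
    (hdt : v ∈ deltaNode E R γ t) (ht'S : t' ∈ S)
    (hdt' : v ∈ deltaNode E R γ t') (hne : t' ≠ t)
    (hd : dep R t' ≤ dep R t) :
    R.par t ∈ S ∧ v ∈ deltaNode E R γ (R.par t) := by
  have htr : t ≠ R.root := ne_root_of_delta hptd hdt
  refine ⟨hS.2 t htS htr, ?_⟩
  by_cases hg : ∃ g ∈ γ (R.par t) t, v ∈ g
  · by_cases hf : ∃ f ∈ E, v ∈ f ∧ f ∉ γ (R.par t) t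
    · obtain ⟨g, hg1, hg2⟩ := hg
      obtain ⟨f, hf1, hf2, hf3⟩ := hf
      rw [mem_delta_iff]
      exact ⟨t, adj_par' htr, g, hg1, f, ⟨hf1, hf3⟩, hg2, hf2⟩
    · exfalso
      push_neg at hf
      have hnd : ¬∃ j, R.par^[j] t' = t := by
        rintro ⟨j, hj⟩
        rcases Nat.eq_zero_or_pos j with hj0 | hjpos
        · rw [hj0, Function.iterate_zero_apply] at hj; exact hne hj
        · have := dep_desc (R := R) htr j hj
          omega
      obtain ⟨s₀, hadj₀, hsub₀⟩ := sep hptd hS hex htS htr ht'S hnd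
      obtain ⟨s, hadj, hb⟩ := mem_delta_iff.mp hdt'
      obtain ⟨e, he1, e', he', hve, hve'⟩ := hb
      have heE : e ∈ E := hptd.cone_sub _ _ hadj he1
      have heD : e ∈ γ (R.par t) t := hf e heE hve
      have he'D : e' ∈ γ (R.par t) t := hf e' he'.1 hve'
      have hss : s ≠ s₀ := by
        rintro rfl; exact he'.2 (hsub₀ he'D)
      exact Set.disjoint_left.mp (hptd.pt3_disj t' s s₀ hadj hadj₀ hss) he1 (hsub₀ heD)
  · exfalso
    push_neg at hg
    obtain ⟨s, hadj, hb⟩ := mem_delta_iff.mp hdt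
    obtain ⟨e, he1, e', he', hve, hve'⟩ := hb
    by_cases hsp : s = R.par t
    · subst hsp
      exact he'.2 (exact_mem hex htS htr he'.1 (fun hc => hg e' hc hve'))
    · have heE : e ∈ E := hptd.cone_sub _ _ hadj he1
      have heU : e ∈ γ t (R.par t) :=
        exact_mem hex htS htr heE (fun hc => hg e hc hve)
      exact Set.disjoint_left.mp
        (hptd.pt3_disj t s (R.par t) hadj (adj_par htr) hsp) he1 heU

end PTDProof

end Main


/-- If all edges of a subtree with the same root are exact, then for every vertex `v`
the set of subtree nodes whose cone-partition boundary contains `v` induces a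
connected subgraph of the subtree. -/
theorem boundary_nodes_connected {V : Type*} [Fintype V] [DecidableEq V]
    (E : Set (Finset V)) (hG : IsGraphEdges E)
    {TV : Type*} [Fintype TV] (R : ParentTree TV) (β : TV → Set V)
    (γ : TV → TV → Set (Finset V))
    (hptd : IsPreTreeDecomp E R β γ)
    (S : Set TV) (hS : IsRootedSubtree R S)
    (hex : SubtreeExact E R γ S) (v : V) :
    ((treeGraph R).induce {t | t ∈ S ∧ v ∈ deltaNode E R γ t}).Preconnected := by
  classical
  have key : ∀ n (a b : {t | t ∈ S ∧ v ∈ deltaNode E R γ t}),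
      PTDProof.dep R a.1 + PTDProof.dep R b.1 ≤ n →
      ((treeGraph R).induce {t | t ∈ S ∧ v ∈ deltaNode E R γ t}).Reachable a b := by
    intro n
    induction n with
    | zero =>
      intro a b hab
      exact absurd (PTDProof.eq_root_of_dep_eq_zero (by omega))
        (PTDProof.ne_root_of_delta hptd a.2.2)
    | succ n ih =>
      intro a b hab
      by_cases heq : a.1 = b.1
      · rw [Subtype.ext heq]
      · rcases le_total (PTDProof.dep R b.1) (PTDProof.dep R a.1) with hle | hle
        · have hc := PTDProof.cross hptd hS hex a.2.1 a.2.2 b.2.1 b.2.2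
            (fun h => heq h.symm) hle
          have har : a.1 ≠ R.root := PTDProof.ne_root_of_delta hptd a.2.2
          have hadj : ((treeGraph R).induce {t | t ∈ S ∧ v ∈ deltaNode E R γ t}).Adj
              a ⟨R.par a.1, hc.1, hc.2⟩ := PTDProof.adj_par har
          refine hadj.reachable.trans (ih ⟨R.par a.1, hc.1, hc.2⟩ b ?_)
          show PTDProof.dep R (R.par a.1) + PTDProof.dep R b.1 ≤ n
          have := PTDProof.dep_par (R := R) har
          omega
        · have hc := PTDProof.cross hptd hS hex b.2.1 b.2.2 a.2.1 a.2.2 heq hle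
          have hbr : b.1 ≠ R.root := PTDProof.ne_root_of_delta hptd b.2.2
          have hadj : ((treeGraph R).induce {t | t ∈ S ∧ v ∈ deltaNode E R γ t}).Adj
              b ⟨R.par b.1, hc.1, hc.2⟩ := PTDProof.adj_par hbr
          refine (ih a ⟨R.par b.1, hc.1, hc.2⟩ ?_).trans hadj.reachable.symm
          show PTDProof.dep R a.1 + PTDProof.dep R (R.par b.1) ≤ n
          have := PTDProof.dep_par (R := R) hbr
          omega
  intro a b
  exact key (PTDProof.dep R a.1 + PTDProof.dep R b.1) a b le_rfl
end

section
/- Let (T, r, β, γ) be a pre-tree decomposition of a graph G and (T', r) a subtree of (T, r) with the same root in which every edge is exact. Then for every node t ∈ V(T'), with P_t the path from r to t and p_s the parent of s, we have Σ_{s ∈ P_t\{r}} |δ(π_s) \ δ(π_{p_s})| = |⋃_{s ∈ P_t} δ(π_s)|. -/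
/-!
Write `sₖ = par^[k] t`, so that `s₀ = t` and `sₙ = r`, and let `Xₖ = γ(sₖ, sₖ₊₁)` be the cone
pointing up the path. Exactness of the edge `sₖ₊₁sₖ` and disjointness of the cones at `sₖ₊₁`
make these cones decrease, `Xₖ₊₁ ⊆ Xₖ`. A vertex of `δ(π_{sᵢ})` lies on an edge outside `Xᵢ`,
and a vertex of `δ(π_{sₖ₊₁})` on an edge of `Xₖ`; so a vertex in both, for `i ≤ k`, lies on
edges inside and outside `Xₖ`, i.e. in `δ(π_{sₖ})`. Under this interval property the sum
`Σ |δ(π_{sₖ}) \ δ(π_{sₖ₊₁})|` telescopes to `|⋃ₖ δ(π_{sₖ}) \ δ(π_r)|`, and `δ(π_r) ⊆ β(r) = ∅`.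
-/

open Finset in
theorem sum_ncard_sdiff_succ_eq_ncard_biUnion_sdiff {α : Type*} [Finite α] (A : ℕ → Set α)
    (n : ℕ) (hA : ∀ i k, i ≤ k → k < n → A i ∩ A (k + 1) ⊆ A k) :
    ∑ i ∈ range n, (A i \ A (i + 1)).ncard = ((⋃ i ∈ range (n + 1), A i) \ A n).ncard := by
  induction n with
  | zero => simp
  | succ n ih =>
    set U := ⋃ i ∈ range (n + 1), A i with hU
    have hUA : U ∩ A (n + 1) ⊆ A n := by
      rintro v ⟨hv, hv'⟩
      obtain ⟨i, hi, hvi⟩ := Set.mem_iUnion₂.1 hv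
      exact hA i n (Nat.lt_succ_iff.1 (mem_range.1 hi)) n.lt_succ_self ⟨hvi, hv'⟩
    have hAU : A n ⊆ U := Set.subset_biUnion_of_mem (u := A) (mem_range.2 n.lt_succ_self)
    have hsplit : (⋃ i ∈ range (n + 2), A i) \ A (n + 1) = (U \ A n) ∪ (A n \ A (n + 1)) := by
      rw [range_add_one, set_biUnion_insert, Set.union_comm, Set.union_sdiff_right, ← hU]
      ext v
      have := fun hv hv' => @hUA v ⟨hv, hv'⟩
      have := @hAU v
      simp only [Set.mem_sdiff, Set.mem_union]
      tauto
    rw [sum_range_succ, ih fun i k hik hk => hA i k hik (by omega), hsplit,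
      Set.ncard_union_eq (Set.disjoint_sdiff_left.mono_right Set.sdiff_subset)]

namespace ParentTree

variable {TV : Type*} (R : ParentTree TV)

theorem iterate_par_root (m : ℕ) : R.par^[m] R.root = R.root :=
  Function.iterate_fixed R.par_root m

theorem eq_root_of_par_eq_self {u : TV} (hu : R.par u = u) : u = R.root := by
  obtain ⟨k, hk⟩ := R.reaches u
  rwa [Function.iterate_fixed hu] at hk

theorem iterate_par_ne_root_of_le {t : TV} {i k : ℕ} (hik : i ≤ k)
    (hk : R.par^[k] t ≠ R.root) : R.par^[i] t ≠ R.root := by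
  intro hi
  obtain ⟨d, rfl⟩ := Nat.exists_eq_add_of_le hik
  rw [add_comm, Function.iterate_add_apply, hi, iterate_par_root] at hk
  exact hk rfl

theorem treeAdj_par {u : TV} (hu : u ≠ R.root) : treeAdj R u (R.par u) :=
  ⟨fun h => hu (R.eq_root_of_par_eq_self h.symm), Or.inl ⟨hu, rfl⟩⟩

theorem par_par_ne_self {u : TV} (hu : u ≠ R.root) : R.par (R.par u) ≠ u := by
  intro h2
  obtain ⟨m, hm⟩ := R.reaches u
  -- `u` would be periodic of period 2, so its orbit `{u, par u}` would have to contain the root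
  rw [← (show Function.IsPeriodicPt R.par 2 u from h2).iterate_mod_apply] at hm
  rcases Nat.mod_two_eq_zero_or_one m with h | h <;> rw [h] at hm
  · exact hu hm
  · rw [Function.iterate_one] at hm
    exact hu (by rw [← h2, hm, R.par_root])

end ParentTree

theorem IsRootedSubtree.iterate_par_mem {TV : Type*} {R : ParentTree TV} {S : Set TV}
    (hS : IsRootedSubtree R S) {t : TV} (ht : t ∈ S) (k : ℕ) : R.par^[k] t ∈ S := by
  induction k with
  | zero => exact ht
  | succ k ih =>
    rw [Function.iterate_succ_apply']
    by_cases hk : R.par^[k] t = R.root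
    · rw [hk, R.par_root]
      exact hS.1
    · exact hS.2 _ ih hk

theorem ExactEdge.sdiff_subset {V TV : Type*} {E : Set (Finset V)}
    {γ : TV → TV → Set (Finset V)} {s t : TV} (h : ExactEdge E γ s t) : E \ γ s t ⊆ γ t s :=
  Set.sdiff_subset_iff.2 h.symm.subset

theorem bdry_subset_deltaNode {V TV : Type*} {E : Set (Finset V)} {R : ParentTree TV}
    {γ : TV → TV → Set (Finset V)} {u w : TV} (huw : treeAdj R u w) :
    bdry E (γ u w) ⊆ deltaNode E R γ u :=
  Set.subset_biUnion_of_mem (u := fun w => bdry E (γ u w)) huw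

namespace IsPreTreeDecomp

variable {V TV : Type*} [DecidableEq V] {E : Set (Finset V)} {R : ParentTree TV}
  {β : TV → Set V} {γ : TV → TV → Set (Finset V)} (hptd : IsPreTreeDecomp E R β γ)
include hptd

theorem deltaNode_root : deltaNode E R γ R.root = ∅ :=
  Set.subset_empty_iff.1 (hptd.root_bag ▸ hptd.pt3_bag R.root)

theorem exists_mem_sdiff_of_mem_deltaNode {u w : TV} (huw : treeAdj R u w) {v : V}
    (hv : v ∈ deltaNode E R γ u) : ∃ e ∈ E \ γ u w, v ∈ e := by
  obtain ⟨w', hw', e, he, e', he', hve, hve'⟩ := Set.mem_iUnion₂.1 hv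
  by_cases hww' : w' = w
  · subst hww'
    exact ⟨e', he', hve'⟩
  · exact ⟨e, ⟨hptd.cone_sub _ _ hw' he,
      Set.disjoint_left.1 (hptd.pt3_disj u w' w hw' huw hww') he⟩, hve⟩

theorem exists_mem_cone_of_mem_deltaNode_par {u : TV} (hu : u ≠ R.root)
    (hex : ExactEdge E γ (R.par u) u) {v : V} (hv : v ∈ deltaNode E R γ (R.par u)) :
    ∃ e ∈ γ u (R.par u), v ∈ e := by
  obtain ⟨e, he, hve⟩ := hptd.exists_mem_sdiff_of_mem_deltaNode (R.treeAdj_par hu).symm hv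
  exact ⟨e, hex.sdiff_subset he, hve⟩

theorem cone_par_subset {u : TV} (hu : u ≠ R.root) (hpu : R.par u ≠ R.root)
    (hex : ExactEdge E γ (R.par u) u) : γ (R.par u) (R.par (R.par u)) ⊆ γ u (R.par u) := by
  intro e he
  refine hex.sdiff_subset ⟨hptd.cone_sub _ _ (R.treeAdj_par hpu) he, ?_⟩
  exact Set.disjoint_left.1 (hptd.pt3_disj _ _ _ (R.treeAdj_par hpu) (R.treeAdj_par hu).symm
    (R.par_par_ne_self hu)) he

variable {S : Set TV} (hS : IsRootedSubtree R S) (hex : SubtreeExact E R γ S) {t : TV}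
  (ht : t ∈ S)
include hS hex ht

theorem cone_iterate_par_subset {i k : ℕ} (hik : i ≤ k) (hk : R.par^[k] t ≠ R.root) :
    γ (R.par^[k] t) (R.par (R.par^[k] t)) ⊆ γ (R.par^[i] t) (R.par (R.par^[i] t)) := by
  induction k, hik using Nat.le_induction with
  | base => exact subset_rfl
  | succ k hik ih =>
    have hk' : R.par^[k] t ≠ R.root := R.iterate_par_ne_root_of_le k.le_succ hk
    rw [Function.iterate_succ_apply'] at hk ⊢
    exact (hptd.cone_par_subset hk' hk (hex _ (hS.iterate_par_mem ht k) hk')).trans (ih hk')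

theorem deltaNode_iterate_par_inter_subset {i k : ℕ} (hik : i ≤ k) :
    deltaNode E R γ (R.par^[i] t) ∩ deltaNode E R γ (R.par^[k + 1] t) ⊆
      deltaNode E R γ (R.par^[k] t) := by
  rintro v ⟨hvi, hvk⟩
  rw [Function.iterate_succ_apply'] at hvk
  by_cases hk : R.par^[k] t = R.root
  · rw [hk, R.par_root] at hvk
    rwa [hk]
  have hi := R.iterate_par_ne_root_of_le hik hk
  obtain ⟨e', he', hve'⟩ := hptd.exists_mem_sdiff_of_mem_deltaNode (R.treeAdj_par hi) hvi
  obtain ⟨e, he, hve⟩ := hptd.exists_mem_cone_of_mem_deltaNode_par hk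
    (hex _ (hS.iterate_par_mem ht k) hk) hvk
  have hcone := hptd.cone_iterate_par_subset hS hex ht hik hk
  exact bdry_subset_deltaNode (R.treeAdj_par hk)
    ⟨e, he, e', ⟨he'.1, fun he'k => he'.2 (hcone he'k)⟩, hve, hve'⟩

end IsPreTreeDecomp

theorem depth_sum_eq_union_general {V : Type*} [Fintype V] [DecidableEq V]
    (E : Set (Finset V))
    {TV : Type*} (R : ParentTree TV) (β : TV → Set V)
    (γ : TV → TV → Set (Finset V))
    (hptd : IsPreTreeDecomp E R β γ)
    (S : Set TV) (hS : IsRootedSubtree R S)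
    (hex : SubtreeExact E R γ S)
    (t : TV) (ht : t ∈ S) (n : ℕ) (hn : R.par^[n] t = R.root) :
    ∑ i ∈ Finset.range n,
        ((deltaNode E R γ (R.par^[i] t)) \ (deltaNode E R γ (R.par^[(i+1)] t))).ncard
      = (⋃ i ∈ Finset.range (n + 1), deltaNode E R γ (R.par^[i] t)).ncard := by
  have key := sum_ncard_sdiff_succ_eq_ncard_biUnion_sdiff
    (fun k => deltaNode E R γ (R.par^[k] t)) n fun i k hik _ =>
      hptd.deltaNode_iterate_par_inter_subset hS hex ht hik
  beta_reduce at key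
  rwa [hn, hptd.deltaNode_root, Set.sdiff_empty] at key

/-- If all edges of a subtree with the same root are exact, then along every
root-to-node path within the subtree,
`Σ_{s ∈ P_t \ {r}} |δ(π_s) \ δ(π_{parent s})| = |⋃_{s ∈ P_t} δ(π_s)|`. -/
theorem depth_sum_eq_union {V : Type*} [Fintype V] [DecidableEq V]
    (E : Set (Finset V)) (hG : IsGraphEdges E)
    {TV : Type*} [Fintype TV] (R : ParentTree TV) (β : TV → Set V)
    (γ : TV → TV → Set (Finset V))
    (hptd : IsPreTreeDecomp E R β γ)
    (S : Set TV) (hS : IsRootedSubtree R S)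
    (hex : SubtreeExact E R γ S)
    (t : TV) (ht : t ∈ S) (n : ℕ) (hn : R.par^[n] t = R.root) :
    ∑ i ∈ Finset.range n,
        ((deltaNode E R γ (R.par^[i] t)) \ (deltaNode E R γ (R.par^[(i+1)] t))).ncard
      = (⋃ i ∈ Finset.range (n + 1), deltaNode E R γ (R.par^[i] t)).ncard :=
  depth_sum_eq_union_general E R β γ hptd S hS hex t ht n hn
end

section
/- Let G be a finite graph, P and Q partitions of E(G), X ∈ P and Y ∈ Q blocks with X ∪ Y ≠ E(G), and suppose v ∈ δ(P_{X→E(G)\Y}) \ δ(P). Then v ∈ δ(Q), no edge incident to v lies in X, every edge incident to v lies in Y ∪ (E(G)\X), and v ∉ δ(Q_{Y→E(G)\X}). -/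
/-- A vertex newly introduced to the boundary by extending the block `X = P i0` with
the complement of `Y = Q j0` lies in `δ(Q)`, is incident to no edge of `X`, has all
its incident edges in `Y ∪ (E \ X)`, and does not lie in `δ(Q_{Y → E \ X})`. -/
theorem new_boundary_vertex_exchanged {V : Type*} [Fintype V] [DecidableEq V]
    (E : Set (Finset V)) (hG : IsGraphEdges E)
    {d e : ℕ} (P : Fin d → Set (Finset V)) (Q : Fin e → Set (Finset V))
    (hP : IsPartitionOn E P) (hQ : IsPartitionOn E Q)
    (i0 : Fin d) (j0 : Fin e) (hXY : P i0 ∪ Q j0 ≠ E)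
    (v : V) (hv : v ∈ deltaPart E (extendPart P i0 (E \ Q j0)) \ deltaPart E P) :
    v ∈ deltaPart E Q ∧
    (∀ e' ∈ E, v ∈ e' → e' ∉ P i0) ∧
    (∀ e' ∈ E, v ∈ e' → e' ∈ Q j0 ∪ (E \ P i0)) ∧
    v ∉ deltaPart E (extendPart Q j0 (E \ P i0)) := by
  obtain ⟨hPd, hPu⟩ := hP
  obtain ⟨hQd, hQu⟩ := hQ
  obtain ⟨hv1, hv2⟩ := hv
  have hPE : ∀ i, P i ⊆ E := fun i => hPu ▸ Set.subset_iUnion P i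
  have hQE : ∀ j, Q j ⊆ E := fun j => hQu ▸ Set.subset_iUnion Q j
  have hsame : ∀ i, ∀ f ∈ P i, v ∈ f → ∀ g ∈ E, v ∈ g → g ∈ P i := by
    intro i f hf hvf g hg hvg
    by_contra hgi
    exact hv2 (Set.mem_iUnion.mpr ⟨i, ⟨f, hf, g, ⟨hg, hgi⟩, hvf, hvg⟩⟩)
  obtain ⟨i, hbi⟩ := Set.mem_iUnion.mp hv1
  obtain ⟨e1, he1, e2, ⟨he2E, he2n⟩, hve1, hve2⟩ := hbi
  have he1E : e1 ∈ E := by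
    by_cases h : i = i0
    · rw [h] at he1
      simp only [extendPart, if_pos rfl] at he1
      rcases he1 with h1 | h1
      · exact hPE i0 h1
      · exact h1.1
    · simp only [extendPart, if_neg h] at he1
      exact hPE i he1.1
  obtain ⟨istar, histar⟩ : ∃ j, e2 ∈ P j := Set.mem_iUnion.mp (hPu ▸ he2E)
  have hEv : ∀ g ∈ E, v ∈ g → g ∈ P istar := hsame istar e2 histar hve2
  have hb : ∀ e' ∈ E, v ∈ e' → e' ∉ P i0 := by
    intro f hfE hvf hfX
    have hii : istar = i0 := by
      by_contra hne
      exact Set.disjoint_left.mp (hPd istar i0 hne) (hEv f hfE hvf) hfX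
    by_cases h : i = i0
    · rw [h] at he2n
      simp only [extendPart, if_pos rfl] at he2n
      exact he2n (Or.inl (hii ▸ histar))
    · simp only [extendPart, if_neg h] at he1
      exact Set.disjoint_left.mp (hPd i i0 h) he1.1 (hii ▸ hEv e1 he1E hve1)
  have hsplit : ∃ fi ∈ E, v ∈ fi ∧ fi ∈ Q j0 ∧ ∃ fo ∈ E, v ∈ fo ∧ fo ∉ Q j0 := by
    by_cases h : i = i0
    · rw [h] at he1 he2n
      simp only [extendPart, if_pos rfl] at he1 he2n
      have he1Y : e1 ∉ Q j0 := by
        rcases he1 with h1 | h1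
        · exact absurd h1 (hb e1 he1E hve1)
        · exact fun hY => h1.2 hY
      have he2Y : e2 ∈ Q j0 := by
        by_contra hY
        exact he2n (Or.inr ⟨he2E, hY⟩)
      exact ⟨e2, he2E, hve2, he2Y, e1, he1E, hve1, he1Y⟩
    · simp only [extendPart, if_neg h] at he1 he2n
      have hii : i = istar := by
        by_contra hne
        exact Set.disjoint_left.mp (hPd i istar hne) he1.1 (hEv e1 he1E hve1)
      have he1Y : e1 ∈ Q j0 := by
        by_contra hY
        exact he1.2 ⟨he1E, hY⟩
      have he2Y : e2 ∉ Q j0 := by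
        intro hY
        exact he2n ⟨hii ▸ histar, fun hc => hc.2 hY⟩
      exact ⟨e1, he1E, hve1, he1Y, e2, he2E, hve2, he2Y⟩
  obtain ⟨fi, hfiE, hvfi, hfiY, fo, hfoE, hvfo, hfoY⟩ := hsplit
  refine ⟨?_, hb, ?_, ?_⟩
  · exact Set.mem_iUnion.mpr ⟨j0, ⟨fi, hfiY, fo, ⟨hfoE, hfoY⟩, hvfi, hvfo⟩⟩
  · intro f hfE hvf
    exact Or.inr ⟨hfE, hb f hfE hvf⟩
  · intro hmem
    obtain ⟨j, hbj⟩ := Set.mem_iUnion.mp hmem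
    obtain ⟨g1, hg1, g2, ⟨hg2E, hg2n⟩, hvg1, hvg2⟩ := hbj
    by_cases h : j = j0
    · rw [h] at hg2n
      simp only [extendPart, if_pos rfl] at hg2n
      exact hg2n (Or.inr ⟨hg2E, hb g2 hg2E hvg2⟩)
    · simp only [extendPart, if_neg h] at hg1
      have hg1E : g1 ∈ E := hQE j hg1.1
      have : g1 ∈ P i0 := by
        by_contra hc
        exact hg1.2 ⟨hg1E, hc⟩
      exact hb g1 hg1E hvg1 this
end

section
/- Let G be a finite graph with all self-loops present (G = G°) and let (T, r, β, γ) be an exact pre-tree decomposition of G. Then for every vertex v of G and every node t of T: if no edge incident to v (including the self-loop vv) lies in the cone γ(t, p) toward the parent p of t, and t' is any node whose path to the root passes through t, then every edge incident to v lies in γ(t, p') for the appropriate direction, and consequently v ∉ δ(π_{t''}) for all nodes t'' outside the subtree rooted at t. -/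
private lemma ptree_root_iter {TV : Type*} (R : ParentTree TV) (k : ℕ) :
    R.par^[k] R.root = R.root :=
  Function.iterate_fixed R.par_root k

private lemma ptree_fix_root {TV : Type*} (R : ParentTree TV) {x : TV} {d : ℕ}
    (hd : 0 < d) (hx : R.par^[d] x = x) : x = R.root := by
  obtain ⟨n, hn⟩ := R.reaches x
  have hmul : ∀ m, R.par^[d * m] x = x := by
    intro m
    induction m with
    | zero => simp
    | succ m ih =>
        rw [Nat.mul_succ, Function.iterate_add_apply, hx, ih]
  have hle : n ≤ d * n := Nat.le_mul_of_pos_left n hd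
  have : R.par^[d * n] x = R.root := by
    rw [show d * n = (d * n - n) + n from (Nat.sub_add_cancel hle).symm,
      Function.iterate_add_apply, hn, ptree_root_iter]
  rw [hmul n] at this
  exact this

private lemma ptree_ne_par {TV : Type*} (R : ParentTree TV) {c : TV}
    (hc : c ≠ R.root) : c ≠ R.par c := by
  intro h
  exact hc (ptree_fix_root R (d := 1) one_pos (by simpa using h.symm))

private lemma treeAdj_iff {TV : Type*} (R : ParentTree TV) (s t : TV) :
    treeAdj R s t ↔ s ≠ t ∧ ((s ≠ R.root ∧ R.par s = t) ∨ (t ≠ R.root ∧ R.par t = s)) := by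
  simp [treeAdj, treeGraph, SimpleGraph.fromRel_adj]

private lemma treeAdj_par {TV : Type*} (R : ParentTree TV) {c : TV}
    (hc : c ≠ R.root) : treeAdj R c (R.par c) := by
  rw [treeAdj_iff]
  exact ⟨ptree_ne_par R hc, Or.inl ⟨hc, rfl⟩⟩

private lemma treeAdj_par' {TV : Type*} (R : ParentTree TV) {c : TV}
    (hc : c ≠ R.root) : treeAdj R (R.par c) c := by
  rw [treeAdj_iff]
  exact ⟨(ptree_ne_par R hc).symm, Or.inr ⟨hc, rfl⟩⟩

/-- In an exact pre-tree decomposition of a graph with all self-loops present: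
if no edge incident to `v` lies in the cone from `t` toward its parent, then every
edge incident to `v` lies in the cone from the parent toward `t`, and consequently
`v ∉ δ(π_{t''})` for every node `t''` outside the subtree rooted at `t`. -/
theorem back_country_vertex {V : Type*} [Fintype V] [DecidableEq V]
    (E : Set (Finset V)) (hG : IsGraphEdges E)
    (hloops : ∀ v : V, ({v} : Finset V) ∈ E)
    {TV : Type*} [Fintype TV] (R : ParentTree TV) (β : TV → Set V)
    (γ : TV → TV → Set (Finset V))
    (hptd : IsPreTreeDecomp E R β γ)
    (hexact : ∀ s t, treeAdj R s t → ExactEdge E γ s t)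
    (hbag : ∀ t, β t = deltaNode E R γ t)
    (v : V) (t : TV) (ht : t ≠ R.root)
    (hv : ∀ e ∈ E, v ∈ e → e ∉ γ t (R.par t)) :
    (∀ e ∈ E, v ∈ e → e ∈ γ (R.par t) t) ∧
    (∀ t'' : TV, ¬ (∃ i, R.par^[i] t'' = t) → v ∉ deltaNode E R γ t'') := by
  classical
  -- flipping an edge to the opposite cone via exactness
  have hflip : ∀ a b, treeAdj R a b → ∀ e ∈ E, e ∉ γ a b → e ∈ γ b a := by
    intro a b hab e he hne
    have hx := hexact a b hab
    rw [ExactEdge] at hx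
    have : e ∈ γ a b ∪ γ b a := hx ▸ he
    exact this.resolve_left hne
  -- L1: all edges at v lie in the cone from each ancestor of t towards t
  have L1 : ∀ k, R.par^[k] t ≠ R.root →
      ∀ e ∈ E, v ∈ e → e ∈ γ (R.par^[k+1] t) (R.par^[k] t) := by
    intro k
    induction k with
    | zero =>
        intro _ e he hve
        simp only [Function.iterate_one, Function.iterate_zero, id_eq]
        exact hflip t (R.par t) (treeAdj_par R ht) e he (hv e he hve)
    | succ k ih =>
        intro hk e he hve
        have hk' : R.par^[k] t ≠ R.root := by
          intro h
          apply hk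
          rw [Function.iterate_succ_apply', h, R.par_root]
        have h1 : e ∈ γ (R.par^[k+1] t) (R.par^[k] t) := ih hk' e he hve
        have hs1 : R.par^[k+1] t = R.par (R.par^[k] t) :=
          Function.iterate_succ_apply' R.par k t
        have hs2 : R.par^[k+2] t = R.par (R.par^[k+1] t) :=
          Function.iterate_succ_apply' R.par (k+1) t
        have ha1 : treeAdj R (R.par^[k+1] t) (R.par^[k] t) := by
          rw [hs1]; exact treeAdj_par' R hk'
        have ha2 : treeAdj R (R.par^[k+1] t) (R.par^[k+2] t) := by
          rw [hs2]; exact treeAdj_par R hk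
        have hne2 : R.par^[k] t ≠ R.par^[k+2] t := by
          intro h
          apply hk'
          apply ptree_fix_root R (d := 2) two_pos
          rw [← Function.iterate_add_apply, Nat.add_comm 2 k]
          exact h.symm
        have hdis := hptd.pt3_disj (R.par^[k+1] t) (R.par^[k] t) (R.par^[k+2] t) ha1 ha2 hne2
        have hnot : e ∉ γ (R.par^[k+1] t) (R.par^[k+2] t) := Set.disjoint_left.mp hdis h1
        have := hflip (R.par^[k+1] t) (R.par^[k+2] t) ha2 e he hnot
        simpa using this
  -- L2: for nodes unrelated to t, all edges at v lie in the cone towards the parent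
  have L2 : ∀ n u, R.par^[n] u = R.root → u ≠ R.root →
      (∀ i, R.par^[i] t ≠ u) → (∀ i, R.par^[i] u ≠ t) →
      ∀ e ∈ E, v ∈ e → e ∈ γ u (R.par u) := by
    intro n
    induction n with
    | zero =>
        intro u h0 hu
        simp only [Function.iterate_zero, id_eq] at h0
        exact absurd h0 hu
    | succ n ih =>
        intro u hroot hu hnt hnd e he hve
        have hroot' : R.par^[n] (R.par u) = R.root := by
          rw [← Function.iterate_succ_apply]
          exact hroot
        by_cases hanc : ∃ k, R.par^[k] t = R.par u
        · have hkspec : R.par^[Nat.find hanc] t = R.par u := Nat.find_spec hanc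
          have hk0 : Nat.find hanc ≠ 0 := by
            intro h
            rw [h] at hkspec
            simp only [Function.iterate_zero, id_eq] at hkspec
            exact hnd 1 (by simpa using hkspec.symm)
          obtain ⟨j, hkj⟩ := Nat.exists_eq_succ_of_ne_zero hk0
          rw [hkj] at hkspec
          simp only [Nat.succ_eq_add_one] at hkspec
          have hsj : R.par^[j+1] t = R.par (R.par^[j] t) :=
            Function.iterate_succ_apply' R.par j t
          have hjroot : R.par^[j] t ≠ R.root := by
            intro h
            have hpr : R.par u = R.root := by
              rw [← hkspec, hsj, h, R.par_root]
            exact Nat.find_min hanc (by omega : j < Nat.find hanc) (by rw [h, hpr])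
          have h1 : e ∈ γ (R.par u) (R.par^[j] t) := by
            have := L1 j hjroot e he hve
            rwa [hkspec] at this
          have ha1 : treeAdj R (R.par u) (R.par^[j] t) := by
            rw [← hkspec, hsj]; exact treeAdj_par' R hjroot
          have hdis := hptd.pt3_disj (R.par u) (R.par^[j] t) u ha1 (treeAdj_par' R hu) (hnt j)
          exact hflip (R.par u) u (treeAdj_par' R hu) e he (Set.disjoint_left.mp hdis h1)
        · have hp'ne : R.par u ≠ R.root := by
            intro h
            obtain ⟨m, hm⟩ := R.reaches t
            exact hanc ⟨m, by rw [hm, h]⟩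
          have hnt' : ∀ i, R.par^[i] t ≠ R.par u := by push_neg at hanc; exact hanc
          have hnd' : ∀ i, R.par^[i] (R.par u) ≠ t := by
            intro i h
            exact hnd (i + 1) (by rwa [Function.iterate_succ_apply])
          have h1 : e ∈ γ (R.par u) (R.par (R.par u)) :=
            ih (R.par u) hroot' hp'ne hnt' hnd' e he hve
          have hne2 : R.par (R.par u) ≠ u := by
            intro h
            apply hu
            apply ptree_fix_root R (d := 2) two_pos
            show R.par^[1+1] u = u
            rwa [Function.iterate_add_apply, Function.iterate_one]
          have hdis := hptd.pt3_disj (R.par u) (R.par (R.par u)) u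
            (treeAdj_par R hp'ne) (treeAdj_par' R hu) hne2
          exact hflip (R.par u) u (treeAdj_par' R hu) e he (Set.disjoint_left.mp hdis h1)
  constructor
  · intro e he hve
    have := L1 0 (by simpa using ht) e he hve
    simpa using this
  · intro t'' ht'' hmem
    have hnd'' : ∀ i, R.par^[i] t'' ≠ t := by push_neg at ht''; exact ht''
    simp only [deltaNode, Set.mem_iUnion, Set.mem_setOf_eq] at hmem
    obtain ⟨s, hadj, hb⟩ := hmem
    simp only [bdry, Set.mem_setOf_eq] at hb
    obtain ⟨e, heX, e', he', hve, hve'⟩ := hb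
    have heE : e ∈ E := hptd.cone_sub t'' s hadj heX
    have hadj0 := hadj
    rw [treeAdj_iff] at hadj0
    obtain ⟨hnets, hcase⟩ := hadj0
    have key : (∀ f ∈ E, v ∈ f → f ∈ γ t'' s) ∨ (∀ f ∈ E, v ∈ f → f ∈ γ s t'') := by
      rcases hcase with ⟨ht''r, hpar⟩ | ⟨hsr, hpar⟩
      · by_cases hk : ∃ k, R.par^[k] t = t''
        · right
          intro f hf hvf
          obtain ⟨k, hkeq⟩ := hk
          have hkr : R.par^[k] t ≠ R.root := by rw [hkeq]; exact ht''r
          have := L1 k hkr f hf hvf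
          rwa [Function.iterate_succ_apply', hkeq, hpar] at this
        · left
          intro f hf hvf
          have hnt'' : ∀ i, R.par^[i] t ≠ t'' := by push_neg at hk; exact hk
          obtain ⟨n, hn⟩ := R.reaches t''
          have := L2 n t'' hn ht''r hnt'' hnd'' f hf hvf
          rwa [hpar] at this
      · by_cases hk : ∃ k, R.par^[k] t = s
        · left
          intro f hf hvf
          obtain ⟨k, hkeq⟩ := hk
          have hkr : R.par^[k] t ≠ R.root := by rw [hkeq]; exact hsr
          have := L1 k hkr f hf hvf
          rwa [Function.iterate_succ_apply', hkeq, hpar] at this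
        · right
          intro f hf hvf
          have hnt'' : ∀ i, R.par^[i] t ≠ s := by push_neg at hk; exact hk
          have hnds : ∀ i, R.par^[i] s ≠ t := by
            intro i hi
            cases i with
            | zero =>
                simp only [Function.iterate_zero, id_eq] at hi
                exact hnt'' 0 (by simpa using hi.symm)
            | succ j =>
                apply hnd'' j
                rw [← hpar, ← Function.iterate_succ_apply]
                exact hi
          obtain ⟨n, hn⟩ := R.reaches s
          have := L2 n s hn hsr hnt'' hnds f hf hvf
          rwa [hpar] at this
    rcases key with hall | hall
    · exact he'.2 (hall e' he'.1 hve')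
    · exact Set.disjoint_left.mp (hptd.pt4 t'' s hadj) heX (hall e heE hve)
end
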